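/- In ℍ^n with the distance d∞(p,q) = ‖p⁻¹q‖, ‖(x,y,t)‖ = max{|(x,y)|, 2|t|^{1/2}}, let 𝕍, 𝕎 and the intrinsic Lipschitz condition be as above with constant α ≤ 1/2 and φ : 𝕎 → 𝕍 intrinsic Lipschitz with φ : gr_φ := {wφ(w) : w ∈ 𝕎}. Then for every p, q ∈ gr_φ one has |p_𝕍 − q_𝕍| ≤ 2α·d∞(p,q), where p = p_𝕎 p_𝕍 is the unique decomposition with p_𝕎 ∈ 𝕎, p_𝕍 ∈ 𝕍. -/

import Mathlib

/-!
Write `p = w φ(w)` and `q = w' φ(w')`. Since the `𝕎`-factors vanish in the first `k`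
coordinates, `|p_𝕍 - q_𝕍| = D := |φ(w) - φ(w')|`. The intrinsic Lipschitz condition bounds `D`
by `α ‖q⁻¹ w φ(w')‖`, and `q⁻¹ w φ(w') = (q⁻¹ p)(φ(w)⁻¹ φ(w'))` where the second factor is
horizontal of norm `D`. The triangle inequality for `‖·‖` then gives `D ≤ α (d∞(p, q) + D)`,
and `α ≤ 1/2` turns this into `D ≤ 2 α d∞(p, q)`.

The triangle inequality holds because, by Cauchy–Schwarz, the symplectic term
`⟨x, y'⟩ - ⟨x', y⟩` of the group law is at most `|(x, y)| |(x', y')|`, so that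
`|t + t' + ω/2| ≤ (‖p‖/2)² + (‖q‖/2)² + ‖p‖ ‖q‖ / 2 = ((‖p‖ + ‖q‖)/2)²`.
-/

/-- Points of the Heisenberg group `ℍ^n = ℝ^n × ℝ^n × ℝ` in exponential coordinates. -/
abbrev HeisPt (n : ℕ) : Type _ := (Fin n → ℝ) × (Fin n → ℝ) × ℝ

/-- The Heisenberg group law
`(x,y,t)·(x',y',t') = (x+x', y+y', t+t'+½⟨x,y'⟩-½⟨x',y⟩)`. -/
noncomputable def heisMul {n : ℕ} (p q : HeisPt n) : HeisPt n :=
  (p.1 + q.1, p.2.1 + q.2.1,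
    p.2.2 + q.2.2 + (∑ i : Fin n, p.1 i * q.2.1 i) / 2 - (∑ i : Fin n, q.1 i * p.2.1 i) / 2)

/-- The group inverse: `p⁻¹ = -p` in exponential coordinates. -/
noncomputable def heisInv {n : ℕ} (p : HeisPt n) : HeisPt n := (-p.1, -p.2.1, -p.2.2)

/-- The homogeneous norm `‖(x,y,t)‖ = max {|(x,y)|, 2|t|^{1/2}}`. -/
noncomputable def heisNorm {n : ℕ} (p : HeisPt n) : ℝ :=
  max (Real.sqrt (∑ i : Fin n, p.1 i ^ 2 + ∑ i : Fin n, p.2.1 i ^ 2))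
    (2 * Real.sqrt |p.2.2|)

/-- The vertical subgroup `𝕎 = {x₁ = ⋯ = x_k = 0}`. -/
def heisW (n k : ℕ) : Set (HeisPt n) := {p | ∀ i : Fin n, (i : ℕ) < k → p.1 i = 0}

/-- The horizontal subgroup `𝕍 = {(x, 0, 0) : x_{k+1} = ⋯ = x_n = 0} ≅ ℝ^k`. -/
def heisV (n k : ℕ) : Set (HeisPt n) :=
  {p | (∀ i : Fin n, k ≤ (i : ℕ) → p.1 i = 0) ∧ p.2.1 = 0 ∧ p.2.2 = 0}

/-- The Euclidean distance of the `𝕍`-components `p_𝕍, q_𝕍 ∈ 𝕍 ≅ ℝ^k` of two points: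
`|p_𝕍 - q_𝕍| = (∑_{i < k} (pᵢ - qᵢ)²)^{1/2}`. -/
noncomputable def heisVdist {n : ℕ} (k : ℕ) (p q : HeisPt n) : ℝ :=
  Real.sqrt (∑ i : Fin n, if (i : ℕ) < k then (p.1 i - q.1 i) ^ 2 else 0)

section GroupLaws

variable {n : ℕ}

lemma heisMul_assoc (a b c : HeisPt n) :
    heisMul (heisMul a b) c = heisMul a (heisMul b c) := by
  simp only [heisMul, Prod.mk.injEq, Pi.add_apply, add_mul, mul_add, Finset.sum_add_distrib]
  refine ⟨add_assoc _ _ _, add_assoc _ _ _, by ring⟩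

lemma heisInv_heisInv (a : HeisPt n) : heisInv (heisInv a) = a := by
  simp [heisInv]

lemma heisInv_heisMul (a b : HeisPt n) :
    heisInv (heisMul a b) = heisMul (heisInv b) (heisInv a) := by
  simp only [heisMul, heisInv, Prod.mk.injEq, Pi.neg_apply, neg_mul, mul_neg, neg_neg]
  refine ⟨by abel, by abel, by ring⟩

lemma heisMul_heisInv_cancel_left (a b : HeisPt n) : heisMul a (heisMul (heisInv a) b) = b := by
  simp only [heisMul, heisInv, Pi.add_apply, Pi.neg_apply, add_mul, mul_add, neg_mul, mul_neg,
    Finset.sum_add_distrib, Finset.sum_neg_distrib]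
  refine Prod.ext (by simp) (Prod.ext (by simp) (by simp only; ring))

lemma heisInv_heisMul_cancel_left (a b : HeisPt n) : heisMul (heisInv a) (heisMul a b) = b := by
  simpa only [heisInv_heisInv] using heisMul_heisInv_cancel_left (heisInv a) b

lemma heisMul_heisInv_mul_heisInv_mul (p q r : HeisPt n) :
    heisMul (heisMul (heisInv q) p) (heisMul (heisInv p) r) = heisMul (heisInv q) r := by
  rw [heisMul_assoc, heisMul_heisInv_cancel_left]

lemma heisInv_mul_heisMul_mul (a b c : HeisPt n) :
    heisMul (heisInv (heisMul a b)) (heisMul a c) = heisMul (heisInv b) c := by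
  rw [heisInv_heisMul, heisMul_assoc, heisInv_heisMul_cancel_left]

end GroupLaws

noncomputable def heisHoriz {n : ℕ} (p : HeisPt n) : EuclideanSpace ℝ (Fin n ⊕ Fin n) :=
  WithLp.toLp 2 (Sum.elim p.1 p.2.1)

section Norm

variable {n : ℕ}

lemma norm_heisHoriz (p : HeisPt n) :
    ‖heisHoriz p‖ = Real.sqrt (∑ i : Fin n, p.1 i ^ 2 + ∑ i : Fin n, p.2.1 i ^ 2) := by
  simp [heisHoriz, EuclideanSpace.norm_eq, Fintype.sum_sum_type]

lemma heisHoriz_heisMul (p q : HeisPt n) :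
    heisHoriz (heisMul p q) = heisHoriz p + heisHoriz q := by
  ext (i | i) <;> simp [heisHoriz, heisMul]

lemma heisNorm_eq_max (p : HeisPt n) :
    heisNorm p = max ‖heisHoriz p‖ (2 * Real.sqrt |p.2.2|) := by
  rw [heisNorm, norm_heisHoriz]

lemma norm_heisHoriz_le_heisNorm (p : HeisPt n) : ‖heisHoriz p‖ ≤ heisNorm p :=
  (heisNorm_eq_max p).ge.trans' (le_max_left _ _)

lemma heisNorm_nonneg (p : HeisPt n) : 0 ≤ heisNorm p :=
  (norm_nonneg _).trans (norm_heisHoriz_le_heisNorm p)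

lemma two_mul_sqrt_le_iff {a c : ℝ} (hc : 0 ≤ c) : 2 * Real.sqrt a ≤ c ↔ a ≤ (c / 2) ^ 2 := by
  rw [← Real.sqrt_le_left (by positivity)]
  constructor <;> intro h <;> linarith

lemma abs_le_heisNorm_sq (p : HeisPt n) : |p.2.2| ≤ (heisNorm p / 2) ^ 2 :=
  (two_mul_sqrt_le_iff (heisNorm_nonneg p)).mp ((heisNorm_eq_max p).ge.trans' (le_max_right _ _))

lemma abs_symplectic_le (p q : HeisPt n) :
    |∑ i : Fin n, p.1 i * q.2.1 i - ∑ i : Fin n, q.1 i * p.2.1 i| ≤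
      ‖heisHoriz p‖ * ‖heisHoriz q‖ := by
  -- the symplectic form is the inner product with the rotated vector `(y', -x')`
  let Jq : EuclideanSpace ℝ (Fin n ⊕ Fin n) := WithLp.toLp 2 (Sum.elim q.2.1 (-q.1))
  have hinner : inner ℝ (heisHoriz p) Jq =
      ∑ i : Fin n, p.1 i * q.2.1 i - ∑ i : Fin n, q.1 i * p.2.1 i := by
    simp [Jq, heisHoriz, PiLp.inner_apply, Fintype.sum_sum_type, sub_eq_add_neg, mul_comm]
  have hnorm : ‖Jq‖ = ‖heisHoriz q‖ := by
    simp [Jq, heisHoriz, EuclideanSpace.norm_eq, Fintype.sum_sum_type, add_comm]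
  rw [← hinner, ← hnorm]
  exact abs_real_inner_le_norm _ _

lemma heisNorm_heisMul_le (p q : HeisPt n) :
    heisNorm (heisMul p q) ≤ heisNorm p + heisNorm q := by
  have hp := norm_heisHoriz_le_heisNorm p
  have hq := norm_heisHoriz_le_heisNorm q
  have hpq : 0 ≤ heisNorm p + heisNorm q := add_nonneg (heisNorm_nonneg p) (heisNorm_nonneg q)
  rw [heisNorm_eq_max]
  refine max_le ?_ ((two_mul_sqrt_le_iff hpq).mpr ?_)
  · rw [heisHoriz_heisMul]
    exact (norm_add_le _ _).trans (add_le_add hp hq)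
  · have hω := (abs_symplectic_le p q).trans
      (mul_le_mul hp hq (norm_nonneg _) (heisNorm_nonneg p))
    calc |(heisMul p q).2.2|
        = |p.2.2 + q.2.2 + (∑ i : Fin n, p.1 i * q.2.1 i - ∑ i : Fin n, q.1 i * p.2.1 i) / 2| := by
          simp only [heisMul]; ring_nf
      _ ≤ |p.2.2| + |q.2.2| + |∑ i : Fin n, p.1 i * q.2.1 i - ∑ i : Fin n, q.1 i * p.2.1 i| / 2 := by
          rw [← abs_two, ← abs_div, abs_two]; exact abs_add_three _ _ _
      _ ≤ (heisNorm p / 2) ^ 2 + (heisNorm q / 2) ^ 2 + heisNorm p * heisNorm q / 2 := by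
          gcongr <;> apply abs_le_heisNorm_sq
      _ = ((heisNorm p + heisNorm q) / 2) ^ 2 := by ring

lemma heisNorm_heisInv (p : HeisPt n) : heisNorm (heisInv p) = heisNorm p := by
  simp [heisNorm, heisInv]

lemma heisNorm_heisInv_mul_comm (p q : HeisPt n) :
    heisNorm (heisMul (heisInv p) q) = heisNorm (heisMul (heisInv q) p) := by
  rw [← heisNorm_heisInv, heisInv_heisMul, heisInv_heisInv]

lemma heisNorm_heisInv_mul_of_horizontal {v v' : HeisPt n} (hv : v.2 = 0) (hv' : v'.2 = 0) :
    heisNorm (heisMul (heisInv v) v') = Real.sqrt (∑ i : Fin n, (v.1 i - v'.1 i) ^ 2) := by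
  simp only [heisNorm, heisMul, heisInv, hv, hv', Prod.fst_zero, Prod.snd_zero, Pi.add_apply,
    Pi.neg_apply, Pi.zero_apply, neg_zero, add_zero, mul_zero, Finset.sum_const_zero, zero_div,
    sub_self, ne_eq, OfNat.ofNat_ne_zero, not_false_eq_true, zero_pow, abs_zero, Real.sqrt_zero,
    Real.sqrt_nonneg, sup_of_le_left]
  exact congrArg Real.sqrt (Finset.sum_congr rfl fun i _ => by ring)

end Norm

lemma heisVdist_heisMul_of_mem {n k : ℕ} {w w' v v' : HeisPt n} (hw : w ∈ heisW n k)
    (hw' : w' ∈ heisW n k) (hv : v ∈ heisV n k) (hv' : v' ∈ heisV n k) :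
    heisVdist k (heisMul w v) (heisMul w' v') = Real.sqrt (∑ i : Fin n, (v.1 i - v'.1 i) ^ 2) := by
  rw [heisVdist]
  congr 1
  refine Finset.sum_congr rfl fun i _ => ?_
  by_cases hik : (i : ℕ) < k
  · simp [hik, heisMul, hw i hik, hw' i hik]
  · simp [hik, hv.1 i (not_lt.mp hik), hv'.1 i (not_lt.mp hik)]

lemma le_two_mul_of_le_mul_add {α d D : ℝ} (hD : 0 ≤ D) (hα : α ≤ 1 / 2)
    (h : D ≤ α * (d + D)) : D ≤ 2 * α * d := by
  nlinarith

theorem graph_horizontal_projection_estimate_general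
    (n k : ℕ) (α : ℝ) (hα : 0 < α) (hα₂ : α ≤ 1 / 2)
    (φ : HeisPt n → HeisPt n)
    (hφV : ∀ w ∈ heisW n k, φ w ∈ heisV n k)
    (hcone : ∀ w ∈ heisW n k, ∀ w' ∈ heisW n k,
      Real.sqrt (∑ i : Fin n, ((φ w).1 i - (φ w').1 i) ^ 2) ≤
        α * heisNorm (heisMul (heisInv (heisMul w' (φ w'))) (heisMul w (φ w')))) :
    ∀ p q : HeisPt n,
      (∃ w ∈ heisW n k, p = heisMul w (φ w)) →
      (∃ w ∈ heisW n k, q = heisMul w (φ w)) →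
      heisVdist k p q ≤ 2 * α * heisNorm (heisMul (heisInv p) q) := by
  rintro p q ⟨w, hw, rfl⟩ ⟨w', hw', rfl⟩
  have hv := hφV w hw
  have hv' := hφV w' hw'
  rw [heisVdist_heisMul_of_mem hw hw' hv hv']
  refine le_two_mul_of_le_mul_add (Real.sqrt_nonneg _) hα₂ ?_
  calc Real.sqrt (∑ i : Fin n, ((φ w).1 i - (φ w').1 i) ^ 2)
      ≤ α * heisNorm (heisMul (heisInv (heisMul w' (φ w'))) (heisMul w (φ w'))) :=
        hcone w hw w' hw'
    _ = α * heisNorm (heisMul (heisMul (heisInv (heisMul w' (φ w'))) (heisMul w (φ w)))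
          (heisMul (heisInv (φ w)) (φ w'))) := by
        rw [← heisInv_mul_heisMul_mul w (φ w) (φ w'), heisMul_heisInv_mul_heisInv_mul]
    _ ≤ α * (heisNorm (heisMul (heisInv (heisMul w (φ w))) (heisMul w' (φ w'))) +
          Real.sqrt (∑ i : Fin n, ((φ w).1 i - (φ w').1 i) ^ 2)) := by
        gcongr
        refine (heisNorm_heisMul_le _ _).trans_eq ?_
        rw [heisNorm_heisInv_mul_comm,
          heisNorm_heisInv_mul_of_horizontal (Prod.ext hv.2.1 hv.2.2) (Prod.ext hv'.2.1 hv'.2.2)]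

/-- Let `φ : 𝕎 → 𝕍 ≅ ℝ^k` be intrinsic Lipschitz with constant `α ≤ 1/2`,
i.e. `|φ(w) - φ(w')| ≤ α ‖(w' φ(w'))⁻¹ w φ(w')‖` for all `w, w' ∈ 𝕎`.  Then for every pair of
points `p, q` on the intrinsic graph `gr_φ = {w φ(w) : w ∈ 𝕎}` one has
`|p_𝕍 - q_𝕍| ≤ 2 α d∞(p, q)`, where `d∞(p, q) = ‖p⁻¹ q‖`. -/
theorem graph_horizontal_projection_estimate
    (n k : ℕ) (hk₁ : 1 ≤ k) (hk₂ : k ≤ n) (α : ℝ) (hα : 0 < α) (hα₂ : α ≤ 1 / 2)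
    (φ : HeisPt n → HeisPt n)
    (hφV : ∀ w ∈ heisW n k, φ w ∈ heisV n k)
    (hcone : ∀ w ∈ heisW n k, ∀ w' ∈ heisW n k,
      Real.sqrt (∑ i : Fin n, ((φ w).1 i - (φ w').1 i) ^ 2) ≤
        α * heisNorm (heisMul (heisInv (heisMul w' (φ w'))) (heisMul w (φ w')))) :
    ∀ p q : HeisPt n,
      (∃ w ∈ heisW n k, p = heisMul w (φ w)) →
      (∃ w ∈ heisW n k, q = heisMul w (φ w)) →
      heisVdist k p q ≤ 2 * α * heisNorm (heisMul (heisInv p) q) :=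
  graph_horizontal_projection_estimate_general n k α hα hα₂ φ hφV hcone
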